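/- arXiv:2412.20847 — 6 statements merged into one kernel-verified Lean document; each statement's English description precedes it below -/
import Mathlib

section
/- Let T > 0, b > 0, β > 0, and let c : [0,T] → ℝ be continuous with c(t) > 0 for all t ∈ [0,T]. Then there is a unique C¹ function g : [0,T] → ℝ satisfying g'(t) = c(t) − g(t)²/b for all t ∈ [0,T] together with the terminal condition g(T) = −β, and this solution satisfies g(t) < 0 for every t ∈ [0,T]. -/
/-!
The vector field `x ↦ c t - x² / b` is only locally Lipschitz, so we first solve the problem for
the field whose quadratic term is frozen outside `[-M, 0]`; that field is globally Lipschitz and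
bounded, so Picard–Lindelöf gives a solution on all of `[0, T]`. Choosing `0 < m ≤ β ≤ M` with
`m² / b < c < M² / b`, the field is positive at `-m` and negative at `-M`, so going backwards
from `-β` no solution can leave `[-M, -m]`. There the two fields agree, which gives existence and
negativity, and any solution of the original problem solves the frozen one, which gives uniqueness.
-/

open Set Filter Topology NNReal

theorem exists_forall_mem_Icc_hasDerivWithinAt_of_lipschitzWith {E : Type*}
    [NormedAddCommGroup E] [NormedSpace ℝ E] [CompleteSpace E]
    {v : ℝ → E → E} {tmin tmax L : ℝ} {K : ℝ≥0} (t₀ : Icc tmin tmax) (x₀ : E)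
    (hlip : ∀ t ∈ Icc tmin tmax, LipschitzWith K (v t))
    (hcont : ∀ x, ContinuousOn (v · x) (Icc tmin tmax))
    (hle : ∀ t ∈ Icc tmin tmax, ∀ x, ‖v t x‖ ≤ L) :
    ∃ α : ℝ → E, α t₀ = x₀ ∧
      ∀ t ∈ Icc tmin tmax, HasDerivWithinAt α (v t (α t)) (Icc tmin tmax) t :=
  IsPicardLindelof.exists_eq_forall_mem_Icc_hasDerivWithinAt₀
    (a := Real.toNNReal (L.toNNReal * max (tmax - t₀) (t₀ - tmin))) (L := L.toNNReal)
    { lipschitzOnWith := fun t ht ↦ (hlip t ht).lipschitzOnWith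
      continuousOn := fun x _ ↦ hcont x
      norm_le := fun t ht x _ ↦ (hle t ht x).trans (Real.le_coe_toNNReal L)
      mul_max_le := by simp }

theorem eqOn_Icc_of_hasDerivWithinAt_of_lipschitzWith {E : Type*}
    [NormedAddCommGroup E] [NormedSpace ℝ E]
    {v : ℝ → E → E} {f g : ℝ → E} {a b : ℝ} {K : ℝ≥0}
    (hlip : ∀ t ∈ Icc a b, LipschitzWith K (v t))
    (hf : ∀ t ∈ Icc a b, HasDerivWithinAt f (v t (f t)) (Icc a b) t)
    (hg : ∀ t ∈ Icc a b, HasDerivWithinAt g (v t (g t)) (Icc a b) t)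
    (hb : f b = g b) : EqOn f g (Icc a b) :=
  ODE_solution_unique_of_mem_Icc_left (s := fun _ ↦ univ)
    (fun t ht ↦ (hlip t (Ioc_subset_Icc_self ht)).lipschitzOnWith)
    (fun t ht ↦ (hf t ht).continuousWithinAt)
    (fun t ht ↦ (hf t (Ioc_subset_Icc_self ht)).mono_of_mem_nhdsWithin (Icc_mem_nhdsLE_of_mem ht))
    (fun _ _ ↦ mem_univ _) (fun t ht ↦ (hg t ht).continuousWithinAt)
    (fun t ht ↦ (hg t (Ioc_subset_Icc_self ht)).mono_of_mem_nhdsWithin (Icc_mem_nhdsLE_of_mem ht))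
    (fun _ _ ↦ mem_univ _) hb

theorem image_le_of_deriv_left_pos {f f' : ℝ → ℝ} {a b y : ℝ}
    (hf : ContinuousOn f (Icc a b)) (hf' : ∀ t ∈ Ioc a b, HasDerivWithinAt f (f' t) (Iic t) t)
    (hb : f b ≤ y) (hy : ∀ t ∈ Ioc a b, f t = y → 0 < f' t) : ∀ t ∈ Icc a b, f t ≤ y := by
  have hrev : ∀ s ∈ Ico (-b) (-a), HasDerivWithinAt (fun s ↦ f (-s)) (-f' (-s)) (Ici s) s := by
    intro s hs
    have h := (hf' (-s) ⟨by linarith [hs.2], by linarith [hs.1]⟩).comp s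
      (hasDerivAt_neg s).hasDerivWithinAt fun u hu ↦ neg_le_neg (mem_Ici.mp hu)
    rwa [mul_neg_one] at h
  have key := image_le_of_deriv_right_lt_deriv_boundary (f := fun s ↦ f (-s)) (a := -b) (b := -a)
    (hf.comp continuousOn_neg fun s hs ↦ ⟨by linarith [hs.2], by linarith [hs.1]⟩) hrev
    (B := fun _ ↦ y) (B' := 0) (by simpa using hb) (fun _ ↦ hasDerivAt_const _ _)
    (fun s hs hfs ↦ neg_neg_of_pos (hy _ ⟨by linarith [hs.2], by linarith [hs.1]⟩ hfs))
  intro t ht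
  simpa using key (x := -t) ⟨by linarith [ht.2], by linarith [ht.1]⟩

theorem mapsTo_Icc_of_hasDerivWithinAt {v : ℝ → ℝ → ℝ} {f : ℝ → ℝ} {a b lo hi : ℝ}
    (hf : ∀ t ∈ Icc a b, HasDerivWithinAt f (v t (f t)) (Icc a b) t)
    (hfb : f b ∈ Icc lo hi) (hlo : ∀ t ∈ Ioc a b, v t lo < 0)
    (hhi : ∀ t ∈ Ioc a b, 0 < v t hi) : MapsTo f (Icc a b) (Icc lo hi) := by
  have hcont : ContinuousOn f (Icc a b) := fun t ht ↦ (hf t ht).continuousWithinAt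
  have hleft : ∀ t ∈ Ioc a b, HasDerivWithinAt f (v t (f t)) (Iic t) t := fun t ht ↦
    (hf t (Ioc_subset_Icc_self ht)).mono_of_mem_nhdsWithin (Icc_mem_nhdsLE_of_mem ht)
  have hupper := image_le_of_deriv_left_pos hcont hleft hfb.2 fun t ht h ↦ h ▸ hhi t ht
  have hlower := image_le_of_deriv_left_pos hcont.neg (fun t ht ↦ (hleft t ht).neg)
    (neg_le_neg hfb.1) fun t ht h ↦ neg_pos.mpr (neg_inj.mp h ▸ hlo t ht)
  exact fun t ht ↦ ⟨neg_le_neg_iff.mp (hlower t ht), hupper t ht⟩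

theorem contDiffOn_one_of_hasDerivWithinAt {f f' : ℝ → ℝ} {a b : ℝ} (hab : a < b)
    (hf : ∀ t ∈ Icc a b, HasDerivWithinAt f (f' t) (Icc a b) t)
    (hf' : ContinuousOn f' (Icc a b)) : ContDiffOn ℝ 1 f (Icc a b) := by
  have hU := uniqueDiffOn_Icc hab
  rw [contDiffOn_one_iff_derivWithin hU]
  exact ⟨fun t ht ↦ (hf t ht).differentiableWithinAt,
    hf'.congr fun t ht ↦ (hf t ht).derivWithin (hU t ht)⟩

theorem abs_sq_sub_sq_le {p q M : ℝ} (hp : |p| ≤ M) (hq : |q| ≤ M) :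
    |p ^ 2 - q ^ 2| ≤ 2 * M * |p - q| := by
  rw [sq_sub_sq, abs_mul, two_mul]
  gcongr
  exact (abs_add_le p q).trans (add_le_add hp hq)

theorem exists_sq_div_lt_and_lt_sq_div {c : ℝ → ℝ} {s : Set ℝ} {b β : ℝ} (hs : IsCompact s)
    (hne : s.Nonempty) (hc : ContinuousOn c s) (hcpos : ∀ t ∈ s, 0 < c t) (hb : 0 < b)
    (hβ : 0 < β) :
    ∃ m M : ℝ, 0 < m ∧ m ≤ β ∧ β ≤ M ∧ ∀ t ∈ s, m ^ 2 / b < c t ∧ c t < M ^ 2 / b := by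
  obtain ⟨t₀, ht₀, hmin⟩ := hs.exists_isMinOn hne hc
  obtain ⟨C, hC⟩ := hs.exists_bound_of_continuousOn hc
  have hlim : Tendsto (fun m : ℝ ↦ m ^ 2 / b) (𝓝[>] 0) (𝓝 0) := by
    simpa using ((continuous_pow 2).div_const b).tendsto 0 |>.mono_left nhdsWithin_le_nhds
  have hsmall : ∀ᶠ m in 𝓝[>] 0, 0 < m ∧ m ≤ β ∧ m ^ 2 / b < c t₀ := by
    filter_upwards [self_mem_nhdsWithin, nhdsWithin_le_nhds (eventually_le_nhds hβ),
      hlim.eventually (eventually_lt_nhds (hcpos t₀ ht₀))] with m hm hmβ hmc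
    exact ⟨hm, hmβ, hmc⟩
  have hlarge : ∀ᶠ M in atTop, β ≤ M ∧ C < M ^ 2 / b := (eventually_ge_atTop β).and
    (((tendsto_pow_atTop two_ne_zero).atTop_div_const hb).eventually_gt_atTop C)
  obtain ⟨m, hm, hmβ, hmc⟩ := hsmall.exists
  obtain ⟨M, hβM, hMC⟩ := hlarge.exists
  exact ⟨m, M, hm, hmβ, hβM, fun t ht ↦
    ⟨hmc.trans_le (hmin ht), (le_abs_self _).trans_lt ((hC t ht).trans_lt hMC)⟩⟩

section ClampedRiccati

variable (c : ℝ → ℝ) (b M : ℝ)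

noncomputable def clampedRiccatiField (t x : ℝ) : ℝ := c t - max (-M) (min x 0) ^ 2 / b

theorem clampedRiccatiField_of_mem {t x : ℝ} (hx : x ∈ Icc (-M) 0) :
    clampedRiccatiField c b M t x = c t - x ^ 2 / b := by
  rw [clampedRiccatiField, min_eq_left hx.2, max_eq_right hx.1]

variable {b M}

theorem abs_max_neg_min_le (hM : 0 ≤ M) (x : ℝ) : |max (-M) (min x 0)| ≤ M :=
  abs_le.mpr ⟨le_max_left _ _, max_le (by linarith) ((min_le_right _ _).trans hM)⟩

theorem lipschitzWith_clampedRiccatiField (hb : 0 < b) (hM : 0 ≤ M) (t : ℝ) :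
    LipschitzWith (Real.toNNReal (2 * M / b)) (clampedRiccatiField c b M t) := by
  have hclamp : LipschitzWith 1 fun x : ℝ ↦ max (-M) (min x 0) :=
    (LipschitzWith.id.min_const 0).const_max (-M)
  refine LipschitzWith.of_dist_le_mul fun x y ↦ ?_
  rw [Real.coe_toNNReal _ (by positivity), Real.dist_eq, Real.dist_eq]
  calc |clampedRiccatiField c b M t x - clampedRiccatiField c b M t y|
      = |max (-M) (min y 0) ^ 2 - max (-M) (min x 0) ^ 2| / b := by
        rw [clampedRiccatiField, clampedRiccatiField, ← abs_of_pos hb, ← abs_div, abs_of_pos hb]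
        congr 1
        ring
    _ ≤ 2 * M * |max (-M) (min y 0) - max (-M) (min x 0)| / b := by
        gcongr
        exact abs_sq_sub_sq_le (abs_max_neg_min_le hM y) (abs_max_neg_min_le hM x)
    _ ≤ 2 * M * |x - y| / b := by
        gcongr 2 * M * ?_ / _
        rw [abs_sub_comm, ← Real.dist_eq, ← Real.dist_eq]
        simpa using hclamp.dist_le_mul x y
    _ = 2 * M / b * |x - y| := by ring

theorem abs_clampedRiccatiField_le (hb : 0 < b) (hM : 0 ≤ M) (t x : ℝ) :
    |clampedRiccatiField c b M t x| ≤ |c t| + M ^ 2 / b := by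
  have hsq : max (-M) (min x 0) ^ 2 ≤ M ^ 2 := sq_le_sq.mpr <| by
    simpa [abs_of_nonneg hM] using abs_max_neg_min_le hM x
  calc |clampedRiccatiField c b M t x| ≤ |c t| + |max (-M) (min x 0) ^ 2 / b| := abs_sub _ _
    _ ≤ |c t| + M ^ 2 / b := by
        rw [abs_of_nonneg (div_nonneg (sq_nonneg _) hb.le)]
        gcongr

theorem exists_hasDerivWithinAt_clampedRiccatiField (hb : 0 < b) (hM : 0 ≤ M) {a T : ℝ}
    (haT : a ≤ T) (hc : ContinuousOn c (Icc a T)) (x₀ : ℝ) :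
    ∃ f : ℝ → ℝ, f T = x₀ ∧
      ∀ t ∈ Icc a T, HasDerivWithinAt f (clampedRiccatiField c b M t (f t)) (Icc a T) t := by
  obtain ⟨C, hC⟩ := isCompact_Icc.exists_bound_of_continuousOn hc
  refine exists_forall_mem_Icc_hasDerivWithinAt_of_lipschitzWith ⟨T, right_mem_Icc.2 haT⟩ x₀
    (fun t _ ↦ lipschitzWith_clampedRiccatiField c hb hM t) (fun x ↦ hc.sub continuousOn_const)
    (L := C + M ^ 2 / b) fun t ht x ↦ ?_
  rw [Real.norm_eq_abs]
  exact (abs_clampedRiccatiField_le c hb hM t x).trans (by gcongr; exact hC t ht)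

end ClampedRiccati

/-- The scalar Riccati terminal value problem
`g' = c(t) - g²/b`, `g(T) = -β` (with `c` continuous and positive, `b, β > 0`)
has a unique C¹ solution on `[0, T]`, and this solution is negative on `[0, T]`. -/
theorem stmt_0 (T b β : ℝ) (hT : 0 < T) (hb : 0 < b) (hβ : 0 < β)
    (c : ℝ → ℝ) (hc : ContinuousOn c (Icc 0 T))
    (hcpos : ∀ t ∈ Icc (0 : ℝ) T, 0 < c t) :
    ∃ g : ℝ → ℝ,
      (ContDiffOn ℝ 1 g (Icc 0 T) ∧
        (∀ t ∈ Icc (0 : ℝ) T, HasDerivWithinAt g (c t - (g t) ^ 2 / b) (Icc 0 T) t) ∧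
        g T = -β) ∧
      (∀ t ∈ Icc (0 : ℝ) T, g t < 0) ∧
      (∀ g' : ℝ → ℝ,
        (ContDiffOn ℝ 1 g' (Icc 0 T) ∧
          (∀ t ∈ Icc (0 : ℝ) T, HasDerivWithinAt g' (c t - (g' t) ^ 2 / b) (Icc 0 T) t) ∧
          g' T = -β) →
        EqOn g g' (Icc 0 T)) := by
  obtain ⟨m, M, hm, hmβ, hβM, hcmM⟩ :=
    exists_sq_div_lt_and_lt_sq_div isCompact_Icc (nonempty_Icc.2 hT.le) hc hcpos hb hβ
  have hM : 0 ≤ M := hβ.le.trans hβM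
  have hG : ∀ t, ∀ x ∈ Icc (-M) (-m), clampedRiccatiField c b M t x = c t - x ^ 2 / b :=
    fun t x hx ↦ clampedRiccatiField_of_mem c b M ⟨hx.1, by linarith [hx.2]⟩
  have hlo : ∀ t ∈ Ioc 0 T, c t - (-M) ^ 2 / b < 0 := fun t ht ↦ by
    rw [neg_sq]
    linarith [(hcmM t (Ioc_subset_Icc_self ht)).2]
  have hhi : ∀ t ∈ Ioc 0 T, 0 < c t - (-m) ^ 2 / b := fun t ht ↦ by
    rw [neg_sq]
    linarith [(hcmM t (Ioc_subset_Icc_self ht)).1]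
  have hTmem : -β ∈ Icc (-M) (-m) := ⟨neg_le_neg hβM, neg_le_neg hmβ⟩
  obtain ⟨f, hfT, hfG⟩ := exists_hasDerivWithinAt_clampedRiccatiField c hb hM hT.le hc (-β)
  have hfI : MapsTo f (Icc 0 T) (Icc (-M) (-m)) := mapsTo_Icc_of_hasDerivWithinAt hfG
    (hfT ▸ hTmem) (fun t ht ↦ by rw [hG t _ ⟨le_rfl, by linarith⟩]; exact hlo t ht)
    (fun t ht ↦ by rw [hG t _ ⟨by linarith, le_rfl⟩]; exact hhi t ht)
  have hf : ∀ t ∈ Icc 0 T, HasDerivWithinAt f (c t - f t ^ 2 / b) (Icc 0 T) t := fun t ht ↦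
    hG t _ (hfI ht) ▸ hfG t ht
  have hfc : ContinuousOn f (Icc 0 T) := fun t ht ↦ (hf t ht).continuousWithinAt
  refine ⟨f, ⟨contDiffOn_one_of_hasDerivWithinAt hT hf (hc.sub ((hfc.pow 2).div_const b)), hf,
    hfT⟩, fun t ht ↦ by linarith [(hfI ht).2], ?_⟩
  rintro g ⟨-, hg, hgT⟩
  have hgI : MapsTo g (Icc 0 T) (Icc (-M) (-m)) :=
    mapsTo_Icc_of_hasDerivWithinAt (v := fun t x ↦ c t - x ^ 2 / b) hg (hgT ▸ hTmem) hlo hhi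
  exact eqOn_Icc_of_hasDerivWithinAt_of_lipschitzWith
    (fun t _ ↦ lipschitzWith_clampedRiccatiField c hb hM t) hfG
    (fun t ht ↦ (hG t _ (hgI ht)).symm ▸ hg t ht) (hfT.trans hgT.symm)
end

section
/- Let σ_B > 0, σ_S > 0, θ > 0, p > 0, and set λ = √(θ² + p²σ_B²/σ_S²). Then 0 < θ/λ < 1 (so artanh(θ/λ) is defined), and the function V(t) = (σ_S²/p²)·( λ·tanh( λ t + artanh(θ/λ) ) − θ ) satisfies V(0) = 0 and V'(t) = σ_B² − 2θ·V(t) − p²·V(t)²/σ_S² for all t ≥ 0. -/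
open Set

/-- The inverse hyperbolic tangent, `artanh x = (1/2) log((1+x)/(1-x))`. -/
noncomputable def artanh (x : ℝ) : ℝ := Real.log ((1 + x) / (1 - x)) / 2

lemma tanh_artanh' (x : ℝ) (h1 : -1 < x) (h2 : x < 1) :
    Real.tanh (Real.log ((1 + x) / (1 - x)) / 2) = x := by
  have hu : (0:ℝ) < (1 + x) / (1 - x) := by
    apply div_pos <;> linarith
  set y := Real.log ((1 + x) / (1 - x)) / 2 with hy
  have he : Real.exp y ^ 2 = (1 + x) / (1 - x) := by
    rw [← Real.exp_nat_mul]
    push_cast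
    rw [hy]
    rw [show (2:ℝ) * (Real.log ((1 + x) / (1 - x)) / 2) = Real.log ((1+x)/(1-x)) by ring]
    exact Real.exp_log hu
  have hep : (0:ℝ) < Real.exp y := Real.exp_pos y
  rw [Real.tanh_eq_sinh_div_cosh, Real.sinh_eq, Real.cosh_eq, Real.exp_neg]
  have hx1 : (1:ℝ) - x ≠ 0 := by linarith
  have hene : Real.exp y ≠ 0 := ne_of_gt hep
  have he' : Real.exp y ^ 2 * (1 - x) = 1 + x := by
    rw [he]; field_simp
  field_simp
  nlinarith [he']

lemma hasDerivAt_tanh' (x : ℝ) :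
    HasDerivAt Real.tanh (1 - Real.tanh x ^ 2) x := by
  have hc : Real.cosh x ≠ 0 := ne_of_gt (Real.cosh_pos x)
  have h := (Real.hasDerivAt_sinh x).div (Real.hasDerivAt_cosh x) hc
  have hfun : Real.tanh = fun y => Real.sinh y / Real.cosh y :=
    funext fun y => Real.tanh_eq_sinh_div_cosh y
  rw [hfun]
  refine HasDerivAt.congr_deriv (f := fun y => Real.sinh y / Real.cosh y) h ?_
  beta_reduce
  have hid : Real.cosh x ^ 2 - Real.sinh x ^ 2 = 1 := Real.cosh_sq_sub_sinh_sq x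
  field_simp

/-- With `λ = √(θ² + p²σ_B²/σ_S²)` one has `0 < θ/λ < 1`
(so `artanh (θ/λ)` is defined), and
`V(t) = (σ_S²/p²)(λ tanh(λt + artanh(θ/λ)) - θ)` satisfies `V(0) = 0` and the
Riccati equation `V' = σ_B² - 2θV - p²V²/σ_S²` for all `t ≥ 0`. -/
theorem stmt_5 (σB σS θ p lam : ℝ) (hσB : 0 < σB) (hσS : 0 < σS) (hθ : 0 < θ)
    (hp : 0 < p) (hlam : lam = Real.sqrt (θ ^ 2 + p ^ 2 * σB ^ 2 / σS ^ 2))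
    (V : ℝ → ℝ)
    (hV : ∀ t, V t = (σS ^ 2 / p ^ 2) * (lam * Real.tanh (lam * t + artanh (θ / lam)) - θ)) :
    (0 < θ / lam ∧ θ / lam < 1) ∧
    V 0 = 0 ∧
    (∀ t : ℝ, 0 ≤ t →
      HasDerivAt V (σB ^ 2 - 2 * θ * V t - p ^ 2 * (V t) ^ 2 / σS ^ 2) t) := by
  have harg : 0 < θ ^ 2 + p ^ 2 * σB ^ 2 / σS ^ 2 := by positivity
  have hlampos : 0 < lam := hlam ▸ Real.sqrt_pos.2 harg
  have hlam2 : lam ^ 2 = θ ^ 2 + p ^ 2 * σB ^ 2 / σS ^ 2 := by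
    rw [hlam]; exact Real.sq_sqrt (le_of_lt harg)
  have hθlt : θ < lam := by
    have h2 : θ ^ 2 < lam ^ 2 := by
      rw [hlam2]
      have : 0 < p ^ 2 * σB ^ 2 / σS ^ 2 := by positivity
      linarith
    exact lt_of_pow_lt_pow_left₀ 2 (le_of_lt hlampos) h2
  have hx0 : 0 < θ / lam := div_pos hθ hlampos
  have hx1 : θ / lam < 1 := (div_lt_one hlampos).2 hθlt
  have htanh : Real.tanh (artanh (θ / lam)) = θ / lam := by
    unfold artanh
    exact tanh_artanh' _ (by linarith) hx1
  have hV0 : V 0 = 0 := by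
    rw [hV 0, mul_zero, zero_add, htanh]
    rw [mul_div_cancel₀ θ (ne_of_gt hlampos)]
    ring
  refine ⟨⟨hx0, hx1⟩, hV0, fun t _ => ?_⟩
  have hVfun : V = fun t =>
      (σS ^ 2 / p ^ 2) * (lam * Real.tanh (lam * t + artanh (θ / lam)) - θ) := funext hV
  set a := artanh (θ / lam)
  set T := Real.tanh (lam * t + a) with hT
  have h1 : HasDerivAt (fun s : ℝ => lam * s + a) lam t := by
    simpa using ((hasDerivAt_id t).const_mul lam).add_const a
  have h2 : HasDerivAt (fun s : ℝ => Real.tanh (lam * s + a)) ((1 - T ^ 2) * lam) t :=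
    by have := (hasDerivAt_tanh' (lam * t + a)).comp t h1; exact this
  have h3 : HasDerivAt V
      ((σS ^ 2 / p ^ 2) * (lam * ((1 - T ^ 2) * lam))) t := by
    rw [hVfun]
    exact ((h2.const_mul lam).sub_const θ).const_mul _
  convert h3 using 1
  rw [hV t, ← hT]
  have hσB2 : σB ^ 2 = σS ^ 2 / p ^ 2 * (lam ^ 2 - θ ^ 2) := by
    field_simp
    field_simp at hlam2
    linarith
  rw [hσB2]
  field_simp
  ring
end

section
/- Let a, b, ρ₀, ρ₁ > 0, V̄ ≥ 0, and f₃ ∈ ℝ. With f₂ = 0, define the 2×2 matrices C = [[0,0],[0,1]], U = (1/a)·[[1,0],[0,0]], V = [[0, −f₃],[0, f₃]], B = [[−(ρ₀+ρ₁V̄), 0],[0, b f₃²]], and the symmetric 4×4 block matrix M = [[C·V + Vᵀ·C + 2B, C·U],[U·C, −2U]]. Then M equals the diagonal matrix diag(−2(ρ₀+ρ₁V̄), 2f₃(1+b f₃), −2/a, 0). In particular, if f₃ < 0 and 1 + b f₃ > 0, then M is negative semidefinite with exactly three negative eigenvalues and one zero eigenvalue. -/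
open Matrix

lemma eig_nonpos' {n : Type*} [Fintype n] [DecidableEq n] {A : Matrix n n ℝ}
    (hA : A.IsHermitian) (h : (-A).PosSemidef) (i : n) : hA.eigenvalues i ≤ 0 := by
  have h0 := h.re_dotProduct_nonneg ⇑(hA.eigenvectorBasis i)
  rw [hA.eigenvalues_eq i]
  simp [neg_mulVec, dotProduct_neg] at h0 ⊢
  linarith

/-- At permanent impact `p = 0` (so `f₂ = 0`), the block matrix
`M = [[CV + VᵀC + 2B, CU],[UC, -2U]]` equals
`diag(-2(ρ₀+ρ₁V̄), 2f₃(1+bf₃), -2/a, 0)`; in particular, if `f₃ < 0` and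
`1 + bf₃ > 0`, then `M` is negative semidefinite with exactly three negative
eigenvalues and one zero eigenvalue. -/
theorem stmt_8 (a b ρ₀ ρ₁ Vb f₃ : ℝ) (ha : 0 < a) (hb : 0 < b)
    (hρ₀ : 0 < ρ₀) (hρ₁ : 0 < ρ₁) (hVb : 0 ≤ Vb)
    (C U V B : Matrix (Fin 2) (Fin 2) ℝ)
    (M : Matrix (Fin 2 ⊕ Fin 2) (Fin 2 ⊕ Fin 2) ℝ)
    (hC : C = !![0, 0; 0, 1])
    (hU : U = (1 / a) • !![1, 0; 0, 0])
    (hV : V = !![0, -f₃; 0, f₃])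
    (hB : B = !![-(ρ₀ + ρ₁ * Vb), 0; 0, b * f₃ ^ 2])
    (hM : M = Matrix.fromBlocks (C * V + Vᵀ * C + (2 : ℝ) • B) (C * U)
      (U * C) ((-2 : ℝ) • U)) :
    M = Matrix.diagonal
      (Sum.elim ![-2 * (ρ₀ + ρ₁ * Vb), 2 * f₃ * (1 + b * f₃)] ![-2 / a, 0]) ∧
    (f₃ < 0 → 0 < 1 + b * f₃ →
      (-M).PosSemidef ∧
      ∃ hM' : M.IsHermitian,
        (Finset.univ.filter fun i => hM'.eigenvalues i < 0).card = 3 ∧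
        (Finset.univ.filter fun i => hM'.eigenvalues i = 0).card = 1) := by
  set d : Fin 2 ⊕ Fin 2 → ℝ :=
    Sum.elim ![-2 * (ρ₀ + ρ₁ * Vb), 2 * f₃ * (1 + b * f₃)] ![-2 / a, 0] with hd
  have hMd : M = Matrix.diagonal d := by
    have hVT : (!![0, -f₃; 0, f₃] : Matrix (Fin 2) (Fin 2) ℝ)ᵀ = !![0, 0; -f₃, f₃] := by
      ext i j; fin_cases i <;> fin_cases j <;> rfl
    subst hC hU hV hB hM
    rw [hVT]
    ext (i | i) (j | j) <;> fin_cases i <;> fin_cases j <;>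
      simp [hd, Matrix.mul_apply, Fin.sum_univ_two, Matrix.diagonal] <;> ring
  refine ⟨hMd, fun h3 h4 => ?_⟩
  have hd0 : d (Sum.inl 0) ≠ 0 := by
    simp only [hd, Sum.elim_inl]
    norm_num
    nlinarith [mul_nonneg hρ₁.le hVb]
  have hd1 : d (Sum.inl 1) ≠ 0 := by
    simp only [hd, Sum.elim_inl]
    norm_num
    exact ⟨ne_of_lt h3, ne_of_gt h4⟩
  have hd2 : d (Sum.inr 0) ≠ 0 := by
    simp only [hd, Sum.elim_inr]
    norm_num
    positivity
  have hdnonneg : ∀ i, 0 ≤ -d i := by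
    rintro (i | i) <;> fin_cases i
    · simp [hd]; nlinarith [mul_nonneg hρ₁.le hVb]
    · simp [hd]; nlinarith [mul_pos (neg_pos.mpr h3) h4]
    · simp [hd, neg_div]; positivity
    · simp [hd]
  have hneg : (-M).PosSemidef := by
    rw [hMd, Matrix.diagonal_neg]
    exact Matrix.posSemidef_diagonal_iff.mpr hdnonneg
  have hM' : M.IsHermitian := hMd ▸ Matrix.isHermitian_diagonal d
  have heig : ∀ i, hM'.eigenvalues i ≤ 0 := eig_nonpos' hM' hneg
  have hrank : M.rank = 3 := by
    rw [hMd, Matrix.rank_diagonal, Fintype.card_subtype]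
    have : (Finset.univ.filter fun i => d i ≠ 0) =
        ({Sum.inl 0, Sum.inl 1, Sum.inr 0} : Finset (Fin 2 ⊕ Fin 2)) := by
      ext (i | i) <;> fin_cases i <;>
        simp [hd0, hd1, hd2] <;> simp [hd]
    rw [this]
    decide
  have hcard3 : (Finset.univ.filter fun i => hM'.eigenvalues i ≠ 0).card = 3 := by
    rw [hM'.rank_eq_card_non_zero_eigs, Fintype.card_subtype] at hrank
    exact hrank
  have hfilter_eq : (Finset.univ.filter fun i => hM'.eigenvalues i < 0) =
      (Finset.univ.filter fun i => hM'.eigenvalues i ≠ 0) := by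
    apply Finset.filter_congr
    intro i _
    simp [lt_iff_le_and_ne, heig i, eq_comm]
  have h1 : (Finset.univ.filter fun i => hM'.eigenvalues i < 0).card = 3 := by
    rw [hfilter_eq]; exact hcard3
  refine ⟨hneg, hM', h1, ?_⟩
  have htot := Finset.card_filter_add_card_filter_not
    (s := (Finset.univ : Finset (Fin 2 ⊕ Fin 2))) (p := fun i => hM'.eigenvalues i ≠ 0)
  have : (Finset.univ.filter fun i => ¬ hM'.eigenvalues i ≠ 0) =
      (Finset.univ.filter fun i => hM'.eigenvalues i = 0) := by
    apply Finset.filter_congr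
    intro i _
    simp
  rw [this, hcard3] at htot
  have hcu : (Finset.univ : Finset (Fin 2 ⊕ Fin 2)).card = 4 := by decide
  rw [hcu] at htot
  omega
end

section
/- Let a, b, ρ₀, ρ₁ > 0, p ≥ 0, V̄ ≥ 0, f₂, f₃ ∈ ℝ with a − b f₂² > 0. Define C = [[0,0],[0,1]], v = (1−f₂, f₂)ᵀ, U = (a − b f₂²)⁻¹·v·vᵀ, V = (a − b f₂²)⁻¹·[[p(1−f₂)/2, −f₃(a − b f₂)],[p f₂/2, a f₃]], B = (a − b f₂²)⁻¹·[[p²/4 − (a − b f₂²)(ρ₀+ρ₁V̄), p f₂ f₃ b/2],[p f₂ f₃ b/2, a b f₃²]], and the symmetric 4×4 block matrix M = [[C·V + Vᵀ·C + 2B, C·U],[U·C, −2U]]. Then the vector (0, 0, −f₂, 1−f₂)ᵀ is nonzero and lies in the kernel of M; consequently det M = 0. -/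
open Matrix

/-- The vector `(0, 0, -f₂, 1-f₂)ᵀ` is nonzero and lies in the
kernel of the block matrix `M = [[CV + VᵀC + 2B, CU],[UC, -2U]]` (with
`U = (a - bf₂²)⁻¹ v vᵀ`, `v = (1-f₂, f₂)ᵀ`); consequently `det M = 0`. -/
theorem stmt_9 (a b ρ₀ ρ₁ p Vb f₂ f₃ : ℝ) (ha : 0 < a) (hb : 0 < b)
    (hρ₀ : 0 < ρ₀) (hρ₁ : 0 < ρ₁) (hp : 0 ≤ p) (hVb : 0 ≤ Vb)
    (hpos : 0 < a - b * f₂ ^ 2)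
    (C U V B : Matrix (Fin 2) (Fin 2) ℝ)
    (M : Matrix (Fin 2 ⊕ Fin 2) (Fin 2 ⊕ Fin 2) ℝ)
    (hC : C = !![0, 0; 0, 1])
    (hU : U = (a - b * f₂ ^ 2)⁻¹ • Matrix.vecMulVec ![1 - f₂, f₂] ![1 - f₂, f₂])
    (hV : V = (a - b * f₂ ^ 2)⁻¹ •
      !![p * (1 - f₂) / 2, -f₃ * (a - b * f₂); p * f₂ / 2, a * f₃])
    (hB : B = (a - b * f₂ ^ 2)⁻¹ •
      !![p ^ 2 / 4 - (a - b * f₂ ^ 2) * (ρ₀ + ρ₁ * Vb), p * f₂ * f₃ * b / 2;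
         p * f₂ * f₃ * b / 2, a * b * f₃ ^ 2])
    (hM : M = Matrix.fromBlocks (C * V + Vᵀ * C + (2 : ℝ) • B) (C * U)
      (U * C) ((-2 : ℝ) • U)) :
    (Sum.elim ![(0 : ℝ), 0] ![-f₂, 1 - f₂]) ≠ 0 ∧
    M *ᵥ (Sum.elim ![(0 : ℝ), 0] ![-f₂, 1 - f₂]) = 0 ∧
    M.det = 0 := by
  have hne : (Sum.elim ![(0 : ℝ), 0] ![-f₂, 1 - f₂]) ≠ 0 := by
    intro h
    have h1 : -f₂ = 0 := congrFun h (Sum.inr 0)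
    have h2 : 1 - f₂ = 0 := congrFun h (Sum.inr 1)
    have : f₂ = 0 := by linarith
    linarith
  have hker : M *ᵥ (Sum.elim ![(0 : ℝ), 0] ![-f₂, 1 - f₂]) = 0 := by
    subst hC hU hV hB hM
    funext i
    rcases i with i | i <;> fin_cases i <;>
      simp [Matrix.mulVec, Matrix.fromBlocks, Matrix.vecMulVec, dotProduct,
        Fin.sum_univ_two, Matrix.mul_apply, Matrix.smul_apply, Matrix.vecHead, Matrix.vecTail, Pi.smul_apply, smul_eq_mul] <;> ring
  refine ⟨hne, hker, ?_⟩
  rw [← Matrix.exists_mulVec_eq_zero_iff]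
  exact ⟨_, hne, hker⟩
end

section
/- Let T > 0 and let M : [0,T] × [0,1] → ℝ^{4×4} be a continuous family of real symmetric matrices such that det M(t,p) = 0 for all (t,p) ∈ [0,T]×[0,1], and such that for every t ∈ [0,T] the matrix M(t,0) has exactly three strictly negative eigenvalues (counted with multiplicity). Then there exists δ > 0 such that M(t,p) is negative semidefinite for all t ∈ [0,T] and all p ∈ [0,δ). -/
/-!
Since `det M(t,p) = 0`, the constant coefficient of the characteristic polynomial
`χ_{t,p}` of `M(t,p)` vanishes. At `p = 0` the eigenvalues are three negative numbers and
a zero, so `χ_{t,0}(x) = x ∏ (x + |λᵢ|)` has all other coefficients strictly positive.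
Coefficients are polynomial in the entries, so by compactness of `[0,T]` they stay positive
for `p` small. A symmetric matrix whose characteristic polynomial has only nonnegative
coefficients has no positive eigenvalue, i.e. it is negative semidefinite.
-/

open Set Matrix Polynomial
open scoped Finset

theorem Polynomial.eval_pos_of_coeff_nonneg {R : Type*} [Semiring R] [PartialOrder R]
    [IsStrictOrderedRing R] {p : R[X]} (hlead : 0 < p.leadingCoeff)
    (hcoeff : ∀ k, 0 ≤ p.coeff k) {x : R} (hx : 0 < x) : 0 < p.eval x := by
  rw [eval_eq_sum_range]
  exact Finset.sum_pos' (fun k _ => mul_nonneg (hcoeff k) (pow_nonneg hx.le k))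
    ⟨p.natDegree, Finset.self_mem_range_succ _, mul_pos hlead (pow_pos hx _)⟩

theorem Finset.sum_powersetCard_prod_pos {ι R : Type*} [CommSemiring R] [LinearOrder R]
    [IsStrictOrderedRing R] {s : Finset ι} {a : ι → R} (ha : ∀ i ∈ s, 0 ≤ a i) {k : ℕ}
    (hk : k ≤ #{i ∈ s | 0 < a i}) : 0 < ∑ t ∈ s.powersetCard k, ∏ i ∈ t, a i := by
  obtain ⟨t, hts, htk⟩ := Finset.exists_subset_card_eq hk
  refine Finset.sum_pos' (fun u hu => Finset.prod_nonneg fun i hi =>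
    ha i ((Finset.mem_powersetCard.mp hu).1 hi)) ⟨t, ?_, Finset.prod_pos fun i hi => ?_⟩
  · exact Finset.mem_powersetCard.mpr ⟨hts.trans (Finset.filter_subset _ _), htk⟩
  · exact (Finset.mem_filter.mp (hts hi)).2

theorem IsCompact.exists_pos_prod_Ioo_subset {X : Type*} [TopologicalSpace X] {s : Set X}
    (hs : IsCompact s) {U : Set (X × ℝ)} (hU : IsOpen U) (hsU : s ×ˢ {0} ⊆ U) :
    ∃ δ > 0, s ×ˢ Ioo (-δ) δ ⊆ U := by
  obtain ⟨u, v, -, hv, hsu, h0v, huv⟩ := generalized_tube_lemma hs isCompact_singleton hU hsU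
  obtain ⟨δ, hδ, hball⟩ := Metric.isOpen_iff.mp hv 0 (h0v rfl)
  refine ⟨δ, hδ, (Set.prod_mono hsu ?_).trans huv⟩
  simpa [Real.ball_eq_Ioo] using hball

namespace Matrix

theorem continuous_charpoly_coeff {R : Type*} [CommRing R] [TopologicalSpace R]
    [IsTopologicalRing R] (n : Type*) [Fintype n] [DecidableEq n] (k : ℕ) :
    Continuous fun A : Matrix n n R => A.charpoly.coeff k := by
  have hcoeff (A : Matrix n n R) : A.charpoly.coeff k =
      MvPolynomial.eval (fun ij : n × n => A ij.1 ij.2) ((charpoly.univ R n).coeff k) := by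
    rw [MvPolynomial.eval, charpoly.univ_coeff_eval₂Hom]
    rfl
  simp only [hcoeff]
  exact (MvPolynomial.continuous_eval _).comp (by fun_prop)

variable {n : Type*} [Fintype n] [DecidableEq n] {A : Matrix n n ℝ}

theorem IsHermitian.posSemidef_neg_of_charpoly_coeff_nonneg (hA : A.IsHermitian)
    (hcoeff : ∀ k, 0 ≤ A.charpoly.coeff k) : (-A).PosSemidef := by
  refine posSemidef_iff_isHermitian_and_spectrum_nonneg.mpr ⟨hA.neg, fun μ hμ => ?_⟩
  rw [← spectrum.neg_eq, Set.mem_neg, mem_spectrum_iff_isRoot_charpoly] at hμ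
  by_contra! hμneg
  simp only [Set.mem_ofPred_eq, not_le] at hμneg
  exact (eval_pos_of_coeff_nonneg (by rw [(charpoly_monic A).leadingCoeff]; exact one_pos)
    hcoeff (neg_pos.mpr hμneg)).ne' hμ

theorem IsHermitian.posSemidef_neg_of_det_eq_zero_of_charpoly_coeff_pos (hA : A.IsHermitian)
    (hdet : A.det = 0)
    (hcoeff : ∀ k ∈ Finset.Ico 1 (Fintype.card n), 0 < A.charpoly.coeff k) :
    (-A).PosSemidef := by
  refine hA.posSemidef_neg_of_charpoly_coeff_nonneg fun k => ?_
  obtain rfl | hk := Nat.eq_zero_or_pos k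
  · have hsign := det_eq_sign_charpoly_coeff A
    rw [hdet, eq_comm, mul_eq_zero] at hsign
    exact (hsign.resolve_left (pow_ne_zero _ (neg_ne_zero.mpr one_ne_zero))).ge
  obtain hlt | rfl | hgt := lt_trichotomy k (Fintype.card n)
  · exact (hcoeff k (Finset.mem_Ico.mpr ⟨hk, hlt⟩)).le
  · rw [← charpoly_natDegree_eq_dim A, (charpoly_monic A).coeff_natDegree]
    exact zero_le_one
  · rw [coeff_eq_zero_of_natDegree_lt (by rwa [charpoly_natDegree_eq_dim])]

/-- Vieta: `χ_A = ∏ (X + |λᵢ|)`, whose coefficient of `X ^ k` is the elementary symmetric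
function of degree `card n - k` in the `|λᵢ|`. -/
theorem IsHermitian.charpoly_coeff_pos (hA : A.IsHermitian)
    (hnonpos : ∀ i, hA.eigenvalues i ≤ 0)
    {k : ℕ} (hk : Fintype.card n - #{i | hA.eigenvalues i < 0} ≤ k)
    (hkn : k ≤ Fintype.card n) : 0 < A.charpoly.coeff k := by
  have hprod : A.charpoly = ∏ i, (X + C (-hA.eigenvalues i)) := by
    simp [hA.charpoly_eq, sub_eq_add_neg]
  rw [hprod, Finset.prod_X_add_C_coeff _ _ hkn]
  refine Finset.sum_powersetCard_prod_pos (fun i _ => neg_nonneg.mpr (hnonpos i)) ?_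
  simp only [neg_pos, Finset.card_univ]
  omega

theorem IsHermitian.eigenvalues_nonpos (hA : A.IsHermitian) (hdet : A.det = 0)
    (hcard : #{i | hA.eigenvalues i < 0} = Fintype.card n - 1) (i : n) :
    hA.eigenvalues i ≤ 0 := by
  obtain ⟨j, -, hj⟩ := Finset.prod_eq_zero_iff.mp
    (by simpa [hdet] using hA.det_eq_prod_eigenvalues.symm)
  by_contra! hi
  have hij : i ≠ j := by rintro rfl; exact hi.ne' hj
  have hsub : ({i | hA.eigenvalues i < 0} : Finset n) ⊆ (Finset.univ.erase j).erase i := by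
    intro l hl
    have hl : hA.eigenvalues l < 0 := (Finset.mem_filter.mp hl).2
    refine Finset.mem_erase.mpr ⟨?_, Finset.mem_erase.mpr ⟨?_, Finset.mem_univ l⟩⟩ <;>
      rintro rfl <;> linarith
  have hcard_pos : 1 < Fintype.card n := Fintype.one_lt_card_iff.mpr ⟨i, j, hij⟩
  have hle := Finset.card_le_card hsub
  rw [Finset.card_erase_of_mem (Finset.mem_erase.mpr ⟨hij, Finset.mem_univ i⟩),
    Finset.card_erase_of_mem (Finset.mem_univ j), Finset.card_univ] at hle
  omega

theorem exists_pos_posSemidef_neg_of_det_eq_zero {X : Type*} [TopologicalSpace X] {s : Set X}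
    (hs : IsCompact s) {M : X → ℝ → Matrix n n ℝ}
    (hcont : ContinuousOn (fun q : X × ℝ => M q.1 q.2) (s ×ˢ Icc 0 1))
    (hherm : ∀ t ∈ s, ∀ p ∈ Icc (0 : ℝ) 1, (M t p).IsHermitian)
    (hdet : ∀ t ∈ s, ∀ p ∈ Icc (0 : ℝ) 1, (M t p).det = 0)
    (hneg : ∀ t ∈ s, ∃ hH : (M t 0).IsHermitian,
      #{i | hH.eigenvalues i < 0} = Fintype.card n - 1) :
    ∃ δ > 0, ∀ t ∈ s, ∀ p : ℝ, 0 ≤ p → p < δ → (-(M t p)).PosSemidef := by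
  set W : Set (Matrix n n ℝ) :=
    {A | ∀ k ∈ Finset.Ico 1 (Fintype.card n), 0 < A.charpoly.coeff k}
  have hW : IsOpen W := by
    simp only [W, Set.ofPred_forall]
    exact isOpen_biInter_finset fun k _ =>
      isOpen_lt continuous_const (continuous_charpoly_coeff n k)
  obtain ⟨U, hU, hUW⟩ := continuousOn_iff'.mp hcont W hW
  have hzero : s ×ˢ {0} ⊆ U := by
    rintro ⟨t, p⟩ ⟨ht, rfl : p = 0⟩
    have h0 : (0 : ℝ) ∈ Icc 0 1 := ⟨le_rfl, zero_le_one⟩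
    obtain ⟨hH, hcard⟩ := hneg t ht
    have hmem : (t, (0 : ℝ)) ∈ (fun q : X × ℝ => M q.1 q.2) ⁻¹' W ∩ s ×ˢ Icc 0 1 :=
      ⟨fun k hk => hH.charpoly_coeff_pos (hH.eigenvalues_nonpos (hdet t ht 0 h0) hcard)
        (by rw [Finset.mem_Ico] at hk; omega) (Finset.mem_Ico.mp hk).2.le, ht, h0⟩
    exact (hUW ▸ hmem).1
  obtain ⟨δ, hδ, hδU⟩ := hs.exists_pos_prod_Ioo_subset hU hzero
  refine ⟨min δ 1, lt_min hδ one_pos, fun t ht p hp hpδ => ?_⟩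
  have hp1 : p ∈ Icc (0 : ℝ) 1 := ⟨hp, (hpδ.trans_le (min_le_right _ _)).le⟩
  have hmem : (t, p) ∈ U ∩ s ×ˢ Icc 0 1 :=
    ⟨hδU ⟨ht, by linarith, hpδ.trans_le (min_le_left _ _)⟩, ht, hp1⟩
  exact (hherm t ht p hp1).posSemidef_neg_of_det_eq_zero_of_charpoly_coeff_pos
    (hdet t ht p hp1) (hUW ▸ hmem).1

end Matrix

theorem stmt_10_general (T : ℝ)
    (M : ℝ → ℝ → Matrix (Fin 4) (Fin 4) ℝ)
    (hcont : ∀ i j, ContinuousOn (fun q : ℝ × ℝ => M q.1 q.2 i j)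
      (Icc 0 T ×ˢ Icc 0 1))
    (hsymm : ∀ t ∈ Icc (0 : ℝ) T, ∀ p ∈ Icc (0 : ℝ) 1, (M t p)ᵀ = M t p)
    (hdet : ∀ t ∈ Icc (0 : ℝ) T, ∀ p ∈ Icc (0 : ℝ) 1, (M t p).det = 0)
    (hneg : ∀ t ∈ Icc (0 : ℝ) T, ∃ hH : (M t 0).IsHermitian,
      (Finset.univ.filter fun i => hH.eigenvalues i < 0).card = 3) :
    ∃ δ > 0, ∀ t ∈ Icc (0 : ℝ) T, ∀ p : ℝ, 0 ≤ p → p < δ →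
      (-(M t p)).PosSemidef :=
  exists_pos_posSemidef_neg_of_det_eq_zero isCompact_Icc
    (continuousOn_pi.mpr fun i => continuousOn_pi.mpr fun j => hcont i j)
    (fun t ht p hp => isHermitian_iff_isSymm.mpr (hsymm t ht p hp)) hdet hneg

/-- Let `M : [0,T] × [0,1] → ℝ^{4×4}` be a continuous family
of real symmetric matrices with identically vanishing determinant such that for
every `t`, the matrix `M(t,0)` has exactly three strictly negative eigenvalues
(with multiplicity). Then there is `δ > 0` such that `M(t,p)` is negative
semidefinite for all `t ∈ [0,T]` and `p ∈ [0,δ)`. -/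
theorem stmt_10 (T : ℝ) (hT : 0 < T)
    (M : ℝ → ℝ → Matrix (Fin 4) (Fin 4) ℝ)
    (hcont : ∀ i j, ContinuousOn (fun q : ℝ × ℝ => M q.1 q.2 i j)
      (Icc 0 T ×ˢ Icc 0 1))
    (hsymm : ∀ t ∈ Icc (0 : ℝ) T, ∀ p ∈ Icc (0 : ℝ) 1, (M t p)ᵀ = M t p)
    (hdet : ∀ t ∈ Icc (0 : ℝ) T, ∀ p ∈ Icc (0 : ℝ) 1, (M t p).det = 0)
    (hneg : ∀ t ∈ Icc (0 : ℝ) T, ∃ hH : (M t 0).IsHermitian,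
      (Finset.univ.filter fun i => hH.eigenvalues i < 0).card = 3) :
    ∃ δ > 0, ∀ t ∈ Icc (0 : ℝ) T, ∀ p : ℝ, 0 ≤ p → p < δ →
      (-(M t p)).PosSemidef :=
  stmt_10_general T M hcont hsymm hdet hneg
end

section
/- Let T > 0, b > 0, β > 0, and let c : [0,T] → ℝ be continuous with c(t) > 0 for all t, and let g : [0,T] → ℝ be the unique C¹ solution of g'(t) = c(t) − g(t)²/b with g(T) = −β. Then g(t) ≥ −max(β, √(b·max_{u∈[0,T]} c(u))) for all t ∈ [0,T]. In particular, if β < 1/2 and max_{[0,T]} c < 1/(4b), then g(t) > −1/2 for all t ∈ [0,T]. -/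
open Set

/-- The solution `g` of the scalar Riccati terminal value
problem `g' = c(t) - g²/b`, `g(T) = -β` satisfies the lower bound
`g(t) ≥ -max(β, √(b·max_{[0,T]} c))` on `[0,T]`; in particular, if `β < 1/2`
and `max_{[0,T]} c < 1/(4b)`, then `g(t) > -1/2` on `[0,T]`. -/
theorem stmt_16 (T b β : ℝ) (hT : 0 < T) (hb : 0 < b) (hβ : 0 < β)
    (c : ℝ → ℝ) (hc : ContinuousOn c (Icc 0 T))
    (hcpos : ∀ t ∈ Icc (0 : ℝ) T, 0 < c t)
    (g : ℝ → ℝ) (hgC : ContDiffOn ℝ 1 g (Icc 0 T))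
    (hg : ∀ t ∈ Icc (0 : ℝ) T, HasDerivWithinAt g (c t - (g t) ^ 2 / b) (Icc 0 T) t)
    (hgT : g T = -β) :
    (∀ t ∈ Icc (0 : ℝ) T,
      -(max β (Real.sqrt (b * sSup (c '' Icc 0 T)))) ≤ g t) ∧
    (β < 1 / 2 → sSup (c '' Icc 0 T) < 1 / (4 * b) →
      ∀ t ∈ Icc (0 : ℝ) T, -(1 / 2) < g t) := by
  set K : ℝ := sSup (c '' Icc 0 T) with hK
  have hbdd : BddAbove (c '' Icc 0 T) := (isCompact_Icc.image_of_continuousOn hc).bddAbove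
  have hcK : ∀ x ∈ Icc (0 : ℝ) T, c x ≤ K := fun x hx => le_csSup hbdd ⟨x, hx, rfl⟩
  have hKpos : 0 < K := lt_of_lt_of_le (hcpos 0 ⟨le_refl 0, hT.le⟩)
    (hcK 0 ⟨le_refl 0, hT.le⟩)
  set M : ℝ := max β (Real.sqrt (b * K)) with hM
  have hMβ : β ≤ M := le_max_left _ _
  have hM0 : 0 < M := lt_of_lt_of_le hβ hMβ
  have hM2 : b * K ≤ M ^ 2 := by
    have h1 : Real.sqrt (b * K) ≤ M := le_max_right _ _
    have h2 : Real.sqrt (b * K) ^ 2 = b * K :=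
      Real.sq_sqrt (by positivity)
    nlinarith [Real.sqrt_nonneg (b * K)]
  have hgcont : ContinuousOn g (Icc 0 T) := hgC.continuousOn
  -- main bound
  have main : ∀ t ∈ Icc (0 : ℝ) T, -M ≤ g t := by
    intro t ht
    by_contra hlt
    push_neg at hlt
    have htT : t < T := by
      rcases lt_or_eq_of_le ht.2 with h | h
      · exact h
      · exfalso; rw [h, hgT] at hlt
        have : -M ≤ -β := neg_le_neg hMβ
        linarith
    have hsub : Icc t T ⊆ Icc 0 T := Icc_subset_Icc ht.1 le_rfl
    have key : ∀ ⦃x⦄, x ∈ Icc t T → g x ≤ g t := by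
      refine image_le_of_deriv_right_lt_deriv_boundary (f' := fun x => c x - (g x) ^ 2 / b)
        (B := fun _ => g t) (B' := fun _ => 0)
        (hgcont.mono hsub) ?_ le_rfl (fun x => hasDerivAt_const x (g t)) ?_
      · intro x hx
        have hx0 : x ∈ Icc (0 : ℝ) T := hsub ⟨hx.1, hx.2.le⟩
        refine (hg x hx0).mono_of_mem_nhdsWithin ?_
        have : Icc x T ∈ nhdsWithin x (Ici x) :=
          Icc_mem_nhdsGE_of_mem ⟨le_refl x, hx.2⟩
        exact Filter.mem_of_superset this (Icc_subset_Icc hx0.1 le_rfl)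
      · intro x hx hgx
        have hx0 : x ∈ Icc (0 : ℝ) T := hsub ⟨hx.1, hx.2.le⟩
        have h1 : b * c x ≤ b * K := by
          have := hcK x hx0; nlinarith
        have h2 : M ^ 2 < (g x) ^ 2 := by
          rw [hgx]; nlinarith
        have : b * c x < (g x) ^ 2 := by nlinarith
        have : c x < (g x) ^ 2 / b := by
          rw [lt_div_iff₀ hb]; nlinarith
        linarith
    have := key (right_mem_Icc.2 htT.le)
    rw [hgT] at this
    have : -M ≤ -β := le_trans (neg_le_neg hMβ) (le_refl _)
    nlinarith [key (right_mem_Icc.2 htT.le), neg_le_neg hMβ]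
  refine ⟨main, ?_⟩
  intro hβ2 hK2 t ht
  have hMlt : M < 1 / 2 := by
    have hs : Real.sqrt (b * K) < 1 / 2 := by
      have h1 : b * K < 1 / 4 := by
        have := (mul_lt_mul_iff_right₀ hb).2 hK2
        calc b * K < b * (1 / (4 * b)) := this
          _ = 1 / 4 := by field_simp
      have := Real.sqrt_lt_sqrt (by positivity) h1
      calc Real.sqrt (b * K) < Real.sqrt (1 / 4) := this
        _ = 1 / 2 := by
          rw [show (1 : ℝ) / 4 = (1 / 2) ^ 2 by norm_num, Real.sqrt_sq (by norm_num)]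
    exact max_lt hβ2 hs
  have := main t ht
  linarith
end
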